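/- arXiv:1801.10261 — 2 statements merged into one kernel-verified Lean document; each statement's English description precedes it below -/
import Mathlib

section
/- Let α, β, k be real, and define on (0,1) the matrix weight W(x) = (1−x)^α x^β [[β+1−kx, (β+1−k)x],[(β+1−k)x, (β+1−k)x²]], the eigenvalue matrices Λₙ = [[−n(α+β+n+2), 0],[1+β−k, −(n+1)(α+β+n+2)+k]], and M = [[1+β, 2(α+β)+2N+5],[0, 3(1+β)]]. Then for every x ∈ (0,1) and N ∈ ℕ the matrix (M − x(Λ_{N+1} + Λ_N)) W(x) is symmetric. -/
open Matrix

/-- The matrix Jacobi-type weight of Example 4.3 (Pacharoni–Tirao–Román). -/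
noncomputable def jacobiW (α β k x : ℝ) : Matrix (Fin 2) (Fin 2) ℝ :=
  ((1 - x) ^ α * x ^ β) •
    !![β + 1 - k * x, (β + 1 - k) * x; (β + 1 - k) * x, (β + 1 - k) * x ^ 2]

/-- Eigenvalue of the operator `D` on the monic orthogonal polynomial `Rₙ`. -/
noncomputable def jacobiΛ (α β k : ℝ) (n : ℕ) : Matrix (Fin 2) (Fin 2) ℝ :=
  !![-(n : ℝ) * (α + β + (n : ℝ) + 2), 0;
     1 + β - k, -((n : ℝ) + 1) * (α + β + (n : ℝ) + 2) + k]

/-- The matrix `M` of Example 4.3. -/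
noncomputable def jacobiM (α β : ℝ) (N : ℕ) : Matrix (Fin 2) (Fin 2) ℝ :=
  !![1 + β, 2 * (α + β) + 2 * (N : ℝ) + 5; 0, 3 * (1 + β)]

/-- Example 4.3: hypothesis (3.1) holds for the matrix Jacobi-type weight:
`(M - x(Λ_{N+1} + Λ_N)) W(x)` is symmetric for all `x ∈ (0,1)` and `N ∈ ℕ`. -/
theorem stmt9 (α β k : ℝ) (N : ℕ) (x : ℝ) (hx : x ∈ Set.Ioo (0 : ℝ) 1) :
    ((jacobiM α β N - x • (jacobiΛ α β k (N + 1) + jacobiΛ α β k N)) *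
      jacobiW α β k x).IsSymm := by
  ext i j
  fin_cases i <;> fin_cases j <;>
    simp [jacobiM, jacobiΛ, jacobiW, Matrix.IsSymm, Matrix.mul_apply,
      Fin.sum_univ_succ, Matrix.transpose_apply] <;> ring
end

section
/- Let V be a complex inner product space of matrix-valued polynomials with orthonormal sequence Q₀, Q₁, Q₂, … where Qₙ has degree n (orthonormality in the module sense: ⟨Qₘ, Qₙ⟩ = δₘₙ I), and let T be a right-module endomorphism of V, symmetric with respect to ⟨·,·⟩, such that Qₙ T has degree at most n+1 for each n. Then ⟨Qₙ T, Qⱼ⟩ = 0 for all j < n−1, and consequently Qₙ T = Xₙ Q_{n+1} + Yₙ Qₙ + Zₙ Q_{n−1} for matrices Xₙ, Yₙ, Zₙ with Zₙ₊₁ = Xₙ* and Yₙ = Yₙ*. -/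
/-!
Symmetry moves `T` across the pairing: `⟨Qₙ T, Qⱼ⟩ = ⟨Qₙ, Qⱼ T⟩ = ⟨Qⱼ T, Qₙ⟩*`, and this vanishes
for `j + 1 < n` because `Qⱼ T` has degree at most `j + 1` while `Qₙ` is orthogonal to every
polynomial of lower degree. Expanding `Qₙ T` in the orthonormal basis, with coefficients
`⟨Qₙ T, Qᵢ⟩`, therefore leaves only the terms `i = n + 1, n, n - 1`, and the same identity
`⟨Qₘ T, Qₙ⟩ = ⟨Qₙ T, Qₘ⟩*` makes the resulting block Jacobi matrix hermitian.
-/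

open Polynomial Matrix

namespace OrthogonalPolynomials

variable {A : Type*} [Ring A] [StarRing A]

structure IsSesquilinear (ip : A[X] → A[X] → A) : Prop where
  add_left : ∀ P₁ P₂ S, ip (P₁ + P₂) S = ip P₁ S + ip P₂ S
  add_right : ∀ P S₁ S₂, ip P (S₁ + S₂) = ip P S₁ + ip P S₂
  mul_left : ∀ a P S, ip (C a * P) S = a * ip P S
  mul_right : ∀ a P S, ip P (C a * S) = ip P S * star a

structure IsOrthonormalBasis (ip : A[X] → A[X] → A) (Q : ℕ → A[X]) : Prop where
  orthonormal : ∀ m n, ip (Q m) (Q n) = if m = n then 1 else 0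
  exists_expansion : ∀ P : A[X], ∃ c : ℕ → A,
    P = ∑ j ∈ Finset.range (P.natDegree + 1), C (c j) * Q j

variable {ip : A[X] → A[X] → A} {Q : ℕ → A[X]}

theorem IsSesquilinear.sum_left (hip : IsSesquilinear ip) {ι : Type*} (s : Finset ι)
    (f : ι → A[X]) (S : A[X]) : ip (∑ i ∈ s, f i) S = ∑ i ∈ s, ip (f i) S :=
  map_sum (AddMonoidHom.mk' (ip · S) fun P₁ P₂ => hip.add_left P₁ P₂ S) f s

theorem IsSesquilinear.sum_right (hip : IsSesquilinear ip) {ι : Type*} (s : Finset ι)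
    (f : ι → A[X]) (P : A[X]) : ip P (∑ i ∈ s, f i) = ∑ i ∈ s, ip P (f i) :=
  map_sum (AddMonoidHom.mk' (ip P) (hip.add_right P)) f s

namespace IsOrthonormalBasis

theorem ip_sum_mul_basis (hip : IsSesquilinear ip) (hQ : IsOrthonormalBasis ip Q) (N : ℕ)
    (c : ℕ → A) (i : ℕ) :
    ip (∑ j ∈ Finset.range N, C (c j) * Q j) (Q i) = if i < N then c i else 0 := by
  simp_rw [hip.sum_left, hip.mul_left, hQ.orthonormal, mul_ite, mul_one, mul_zero,
    Finset.sum_ite_eq', Finset.mem_range]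

theorem ip_eq_zero_of_natDegree_lt (hip : IsSesquilinear ip) (hQ : IsOrthonormalBasis ip Q)
    {P : A[X]} {j : ℕ} (hj : P.natDegree < j) : ip P (Q j) = 0 := by
  obtain ⟨c, hc⟩ := hQ.exists_expansion P
  rw [hc, hQ.ip_sum_mul_basis hip, if_neg (by omega)]

theorem ip_basis_left_eq_star (hip : IsSesquilinear ip) (hQ : IsOrthonormalBasis ip Q)
    (j : ℕ) (P : A[X]) : ip (Q j) P = star (ip P (Q j)) := by
  obtain ⟨c, hc⟩ := hQ.exists_expansion P
  rw [hc, hip.sum_right, hQ.ip_sum_mul_basis hip]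
  simp_rw [hip.mul_right, hQ.orthonormal, ite_mul, one_mul, zero_mul]
  rw [Finset.sum_ite_eq, apply_ite star, star_zero]
  simp only [Finset.mem_range]

theorem eq_sum_ip_mul_basis (hip : IsSesquilinear ip) (hQ : IsOrthonormalBasis ip Q)
    {P : A[X]} {N : ℕ} (hN : P.natDegree < N) :
    P = ∑ i ∈ Finset.range N, C (ip P (Q i)) * Q i := by
  obtain ⟨c, hc⟩ := hQ.exists_expansion P
  have hcoeff : ∀ j < P.natDegree + 1, ip P (Q j) = c j := fun j hj => by
    rw [hc, hQ.ip_sum_mul_basis hip, if_pos hj]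
  calc P = ∑ j ∈ Finset.range (P.natDegree + 1), C (c j) * Q j := hc
    _ = ∑ j ∈ Finset.range (P.natDegree + 1), C (ip P (Q j)) * Q j :=
      Finset.sum_congr rfl fun j hj => by rw [hcoeff j (Finset.mem_range.mp hj)]
    _ = ∑ j ∈ Finset.range N, C (ip P (Q j)) * Q j := by
      refine Finset.sum_subset (Finset.range_subset_range.mpr hN) fun j _ hj => ?_
      rw [hQ.ip_eq_zero_of_natDegree_lt hip (by simpa using hj), map_zero, zero_mul]

theorem eq_three_term (hip : IsSesquilinear ip) (hQ : IsOrthonormalBasis ip Q)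
    {P : A[X]} {n : ℕ} (hdeg : P.natDegree ≤ n + 1)
    (hlow : ∀ j, j + 1 < n → ip P (Q j) = 0) :
    P = C (ip P (Q (n + 1))) * Q (n + 1) + C (ip P (Q n)) * Q n +
      (if n = 0 then 0 else C (ip P (Q (n - 1))) * Q (n - 1)) := by
  conv_lhs => rw [hQ.eq_sum_ip_mul_basis hip (P := P) (N := n + 2) (by omega)]
  cases n with
  | zero => simp [Finset.sum_range_succ, add_comm]
  | succ m =>
    have hbelow : ∑ j ∈ Finset.range m, C (ip P (Q j)) * Q j = 0 :=
      Finset.sum_eq_zero fun j hj => by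
        rw [hlow j (by simpa using hj), map_zero, zero_mul]
    simp only [Finset.sum_range_succ, hbelow, zero_add, Nat.add_sub_cancel,
      if_neg (Nat.succ_ne_zero m)]
    abel

variable {T : A[X] → A[X]}

theorem ip_apply_basis_comm (hip : IsSesquilinear ip) (hQ : IsOrthonormalBasis ip Q)
    (hT : ∀ P S, ip (T P) S = ip P (T S)) (m n : ℕ) :
    ip (T (Q m)) (Q n) = star (ip (T (Q n)) (Q m)) := by
  rw [hT, hQ.ip_basis_left_eq_star hip]

theorem ip_apply_basis_eq_zero (hip : IsSesquilinear ip) (hQ : IsOrthonormalBasis ip Q)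
    (hT : ∀ P S, ip (T P) S = ip P (T S)) (hTdeg : ∀ n, (T (Q n)).natDegree ≤ n + 1)
    {n j : ℕ} (hjn : j + 1 < n) : ip (T (Q n)) (Q j) = 0 := by
  rw [hQ.ip_apply_basis_comm hip hT,
    hQ.ip_eq_zero_of_natDegree_lt hip ((hTdeg j).trans_lt hjn), star_zero]

end IsOrthonormalBasis

end OrthogonalPolynomials

open OrthogonalPolynomials

theorem stmt14_general (R : ℕ)
    (ip : Polynomial (Matrix (Fin R) (Fin R) ℂ) → Polynomial (Matrix (Fin R) (Fin R) ℂ) →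
      Matrix (Fin R) (Fin R) ℂ)
    (hadd_left : ∀ P₁ P₂ S, ip (P₁ + P₂) S = ip P₁ S + ip P₂ S)
    (hadd_right : ∀ P S₁ S₂, ip P (S₁ + S₂) = ip P S₁ + ip P S₂)
    (hmul_left : ∀ (A : Matrix (Fin R) (Fin R) ℂ) P S, ip (C A * P) S = A * ip P S)
    (hmul_right : ∀ (A : Matrix (Fin R) (Fin R) ℂ) P S, ip P (C A * S) = ip P S * Aᴴ)
    (Q : ℕ → Polynomial (Matrix (Fin R) (Fin R) ℂ))
    (honb : ∀ m n, ip (Q m) (Q n) = if m = n then 1 else 0)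
    (hbasis : ∀ P : Polynomial (Matrix (Fin R) (Fin R) ℂ),
      ∃ c : ℕ → Matrix (Fin R) (Fin R) ℂ,
        P = ∑ j ∈ Finset.range (P.natDegree + 1), C (c j) * Q j)
    (T : Polynomial (Matrix (Fin R) (Fin R) ℂ) → Polynomial (Matrix (Fin R) (Fin R) ℂ))
    (hTsym : ∀ P S, ip (T P) S = ip P (T S))
    (hTdeg : ∀ n, (T (Q n)).natDegree ≤ n + 1) :
    (∀ n j, j + 1 < n → ip (T (Q n)) (Q j) = 0) ∧
      ∃ X Y Z : ℕ → Matrix (Fin R) (Fin R) ℂ,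
        (∀ n, T (Q n) = C (X n) * Q (n + 1) + C (Y n) * Q n +
          (if n = 0 then 0 else C (Z n) * Q (n - 1))) ∧
        (∀ n, Z (n + 1) = (X n)ᴴ) ∧ (∀ n, Y n = (Y n)ᴴ) := by
  have hip : IsSesquilinear ip :=
    ⟨hadd_left, hadd_right, hmul_left, fun a P S => by rw [hmul_right, star_eq_conjTranspose]⟩
  have hQ : IsOrthonormalBasis ip Q := ⟨honb, hbasis⟩
  have hvanish : ∀ n j, j + 1 < n → ip (T (Q n)) (Q j) = 0 := fun _ _ =>
    hQ.ip_apply_basis_eq_zero hip hTsym hTdeg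
  exact ⟨hvanish, fun n => ip (T (Q n)) (Q (n + 1)), fun n => ip (T (Q n)) (Q n),
    fun n => ip (T (Q n)) (Q (n - 1)), fun n => hQ.eq_three_term hip (hTdeg n) (hvanish n),
    fun n => (hQ.ip_apply_basis_comm hip hTsym (n + 1) n).trans (star_eq_conjTranspose _),
    fun n => (hQ.ip_apply_basis_comm hip hTsym n n).trans (star_eq_conjTranspose _)⟩

/-- Proposition 3.3 in the matrix-valued setting: a symmetric right-module endomorphism
`T` of the space of matrix polynomials that raises the degree of each orthonormal
polynomial `Qₙ` by at most one acts block-tridiagonally, with hermitian block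
tridiagonal matrix: `Qₙ T = Xₙ Q_{n+1} + Yₙ Qₙ + Zₙ Q_{n-1}`, `Z_{n+1} = Xₙ*`,
`Yₙ = Yₙ*`. -/
theorem stmt14 (R : ℕ)
    (ip : Polynomial (Matrix (Fin R) (Fin R) ℂ) → Polynomial (Matrix (Fin R) (Fin R) ℂ) →
      Matrix (Fin R) (Fin R) ℂ)
    (hadd_left : ∀ P₁ P₂ S, ip (P₁ + P₂) S = ip P₁ S + ip P₂ S)
    (hadd_right : ∀ P S₁ S₂, ip P (S₁ + S₂) = ip P S₁ + ip P S₂)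
    (hmul_left : ∀ (A : Matrix (Fin R) (Fin R) ℂ) P S, ip (C A * P) S = A * ip P S)
    (hmul_right : ∀ (A : Matrix (Fin R) (Fin R) ℂ) P S, ip P (C A * S) = ip P S * Aᴴ)
    (Q : ℕ → Polynomial (Matrix (Fin R) (Fin R) ℂ))
    (hdeg : ∀ n, (Q n).natDegree = n)
    (honb : ∀ m n, ip (Q m) (Q n) = if m = n then 1 else 0)
    (hbasis : ∀ P : Polynomial (Matrix (Fin R) (Fin R) ℂ),
      ∃ c : ℕ → Matrix (Fin R) (Fin R) ℂ,
        P = ∑ j ∈ Finset.range (P.natDegree + 1), C (c j) * Q j)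
    (T : Polynomial (Matrix (Fin R) (Fin R) ℂ) → Polynomial (Matrix (Fin R) (Fin R) ℂ))
    (hTadd : ∀ P S, T (P + S) = T P + T S)
    (hTmod : ∀ (A : Matrix (Fin R) (Fin R) ℂ) P, T (C A * P) = C A * T P)
    (hTsym : ∀ P S, ip (T P) S = ip P (T S))
    (hTdeg : ∀ n, (T (Q n)).natDegree ≤ n + 1) :
    (∀ n j, j + 1 < n → ip (T (Q n)) (Q j) = 0) ∧
      ∃ X Y Z : ℕ → Matrix (Fin R) (Fin R) ℂ,
        (∀ n, T (Q n) = C (X n) * Q (n + 1) + C (Y n) * Q n +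
          (if n = 0 then 0 else C (Z n) * Q (n - 1))) ∧
        (∀ n, Z (n + 1) = (X n)ᴴ) ∧ (∀ n, Y n = (Y n)ᴴ) :=
  stmt14_general R ip hadd_left hadd_right hmul_left hmul_right Q honb hbasis T hTsym hTdeg
end
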